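/- Let (ρ, W_ρ) be an irreducible unitary representation of Spin(n) and let W_λ be an irreducible summand of W_ρ ⊗ ℂⁿ with orthogonal projection Π. Define Clifford homomorphisms p_λ(X)φ := Π(φ ⊗ X). Then for any orthonormal basis {eᵢ} of ℝⁿ, (1) Σᵢ p_λ(eᵢ)* p_λ(eᵢ) = (dim W_λ / dim W_ρ)·Id on W_ρ, and (2) Σᵢ p_λ(eᵢ) p_λ(eᵢ)* = Id on W_λ. -/

import Mathlib

/-
Writing `ι X : Wρ → Wρ ⊗ ℂⁿ` for `φ ↦ φ ⊗ X`, we have `p X = Π ∘ ι X`, so `Σᵢ p(eᵢ)* p(eᵢ)` is the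
partial trace over `ℂⁿ` of `Q = Π* Π`, and `Σᵢ p(eᵢ) p(eᵢ)* = Π (Σᵢ ι(eᵢ) ι(eᵢ)*) Π* = Π Π* = Id`.
Sums `Σᵢ B(eᵢ, eᵢ)` of a bilinear map do not depend on the orthonormal basis; comparing the bases
`e` and `τ(g) e` and using `(ρ(g) ⊗ τ(g)) ∘ ι X = ι (τ(g) X) ∘ ρ(g)`, the equivariance of `Π`
makes the partial trace of `Q` invariant under conjugation by `ρ(g)`. By Schur's lemma it is a
scalar, and its trace is `tr Q = tr (Π Π*) = dim W_λ`.
-/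

open LinearMap

theorem OrthonormalBasis.sum_apply_self_eq {ι κ E F : Type*} [Fintype ι] [Fintype κ]
    [NormedAddCommGroup E] [InnerProductSpace ℝ E] [AddCommMonoid F] [Module ℝ F]
    (B : E →ₗ[ℝ] E →ₗ[ℝ] F) (b : OrthonormalBasis ι ℝ E) (c : OrthonormalBasis κ ℝ E) :
    ∑ i, B (b i) (b i) = ∑ j, B (c j) (c j) :=
  calc ∑ i, B (b i) (b i) = ∑ i, B (b i) (∑ j, inner ℝ (c j) (b i) • c j) := by
        simp only [c.sum_repr']
    _ = ∑ j, B (∑ i, inner ℝ (b i) (c j) • b i) (c j) := by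
        simp only [map_sum, map_smul, LinearMap.sum_apply, LinearMap.smul_apply, real_inner_comm]
        exact Finset.sum_comm
    _ = ∑ j, B (c j) (c j) := by simp only [b.sum_repr']

theorem LinearMap.eq_trace_div_finrank_smul_id_of_commute {K V ι : Type*} [Field K] [IsAlgClosed K]
    [CharZero K] [AddCommGroup V] [Module K V] [FiniteDimensional K V] (ρ : ι → V →ₗ[K] V)
    (hirr : ∀ q : Submodule K V, (∀ i, q.map (ρ i) ≤ q) → q = ⊥ ∨ q = ⊤)
    (A : V →ₗ[K] V) (hA : ∀ i, A ∘ₗ ρ i = ρ i ∘ₗ A) :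
    A = (trace K V A / Module.finrank K V) • LinearMap.id := by
  rcases subsingleton_or_nontrivial V with hV | hV
  · exact LinearMap.ext fun _ => Subsingleton.elim _ _
  obtain ⟨μ, hμ⟩ := Module.End.exists_eigenvalue A
  have hinv : ∀ i, (Module.End.eigenspace A μ).map (ρ i) ≤ Module.End.eigenspace A μ := by
    rintro i _ ⟨x, hx, rfl⟩
    rw [SetLike.mem_coe, Module.End.mem_eigenspace_iff] at hx
    rw [Module.End.mem_eigenspace_iff, ← LinearMap.comp_apply, hA, LinearMap.comp_apply, hx,
      map_smul]
  have hA : A = μ • LinearMap.id := by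
    have htop := (hirr _ hinv).resolve_left hμ
    ext x
    exact Module.End.mem_eigenspace_iff.mp (htop ▸ Submodule.mem_top : x ∈ _)
  have hd : (Module.finrank K V : K) ≠ 0 := Nat.cast_ne_zero.mpr Module.finrank_pos.ne'
  rw [hA, map_smul, trace_id, smul_eq_mul, mul_div_cancel_right₀ _ hd]

theorem LinearIsometryEquiv.comp_eq_comp_of_adjoint_comp_comp_eq {𝕜 E : Type*} [RCLike 𝕜]
    [NormedAddCommGroup E] [InnerProductSpace 𝕜 E] [FiniteDimensional 𝕜 E] (R : E ≃ₗᵢ[𝕜] E)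
    {A : E →ₗ[𝕜] E} (h : adjoint R.toLinearMap ∘ₗ A ∘ₗ R.toLinearMap = A) :
    A ∘ₗ R.toLinearMap = R.toLinearMap ∘ₗ A := by
  calc A ∘ₗ R.toLinearMap
      = (R.toLinearMap ∘ₗ R.symm.toLinearMap) ∘ₗ A ∘ₗ R.toLinearMap := by
        rw [R.toLinearEquiv_symm, R.toLinearEquiv.comp_symm, id_comp]
    _ = R.toLinearMap ∘ₗ A := by rw [comp_assoc, ← R.adjoint_toLinearMap_eq_symm, h]

theorem LinearMap.adjoint_comp_comp_eq_of_comp_eq {𝕜 E F : Type*} [RCLike 𝕜]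
    [NormedAddCommGroup E] [InnerProductSpace 𝕜 E] [FiniteDimensional 𝕜 E]
    [NormedAddCommGroup F] [InnerProductSpace 𝕜 F] [FiniteDimensional 𝕜 F]
    {P : E →ₗ[𝕜] F} {U : E →ₗ[𝕜] E} (L : F ≃ₗᵢ[𝕜] F) (h : P ∘ₗ U = L.toLinearMap ∘ₗ P) :
    adjoint U ∘ₗ (adjoint P ∘ₗ P) ∘ₗ U = adjoint P ∘ₗ P :=
  calc adjoint U ∘ₗ (adjoint P ∘ₗ P) ∘ₗ U = adjoint (P ∘ₗ U) ∘ₗ P ∘ₗ U := by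
        simp only [adjoint_comp, comp_assoc]
    _ = adjoint P ∘ₗ (adjoint L.toLinearMap ∘ₗ L.toLinearMap) ∘ₗ P := by
        simp only [h, adjoint_comp, comp_assoc]
    _ = adjoint P ∘ₗ P := by
        rw [L.adjoint_toLinearMap_eq_symm, L.toLinearEquiv_symm, L.toLinearEquiv.symm_comp, id_comp]

noncomputable section

namespace Clifford

variable {n : ℕ} {W : Type*} [NormedAddCommGroup W] [InnerProductSpace ℂ W]

def tensorWith (X : EuclideanSpace ℝ (Fin n)) : W →ₗ[ℂ] PiLp 2 fun _ : Fin n => W where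
  toFun φ := WithLp.toLp 2 fun i => (X i : ℂ) • φ
  map_add' φ ψ := by ext i; simp [smul_add]
  map_smul' c φ := by ext i; simp [smul_comm c]

@[simp]
theorem tensorWith_apply (X : EuclideanSpace ℝ (Fin n)) (φ : W) (i : Fin n) :
    tensorWith X φ i = (X i : ℂ) • φ := rfl

def tensorMap (R : W →ₗ[ℂ] W) (t : EuclideanSpace ℝ (Fin n) →ₗ[ℝ] EuclideanSpace ℝ (Fin n)) :
    (PiLp 2 fun _ : Fin n => W) →ₗ[ℂ] PiLp 2 fun _ : Fin n => W where
  toFun f := WithLp.toLp 2 fun i => ∑ k, (t (EuclideanSpace.single k 1) i : ℂ) • R (f k)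
  map_add' f g := by ext i; simp [smul_add, Finset.sum_add_distrib]
  map_smul' c f := by ext i; simp [Finset.smul_sum, smul_comm c]

@[simp]
theorem tensorMap_apply (R : W →ₗ[ℂ] W)
    (t : EuclideanSpace ℝ (Fin n) →ₗ[ℝ] EuclideanSpace ℝ (Fin n))
    (f : PiLp 2 fun _ : Fin n => W) (i : Fin n) :
    tensorMap R t f i = ∑ k, (t (EuclideanSpace.single k 1) i : ℂ) • R (f k) := rfl

theorem tensorMap_comp_tensorWith (R : W →ₗ[ℂ] W)
    (t : EuclideanSpace ℝ (Fin n) →ₗ[ℝ] EuclideanSpace ℝ (Fin n)) (X : EuclideanSpace ℝ (Fin n)) :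
    tensorMap R t ∘ₗ tensorWith X = tensorWith (t X) ∘ₗ R := by
  ext φ i
  have htX : t X = ∑ k, X k • t (EuclideanSpace.single k 1) := by
    conv_lhs => rw [← (EuclideanSpace.basisFun (Fin n) ℝ).sum_repr X]
    simp
  simp only [comp_apply, tensorMap_apply, tensorWith_apply, htX, WithLp.ofLp_sum, WithLp.ofLp_smul,
    Finset.sum_apply, Pi.smul_apply, smul_eq_mul, Complex.ofReal_sum, Complex.ofReal_mul,
    Finset.sum_smul, map_smul, smul_smul, mul_comm]

theorem tensorWith_add (X Y : EuclideanSpace ℝ (Fin n)) :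
    tensorWith (W := W) (X + Y) = tensorWith X + tensorWith Y := by
  ext; simp [add_smul]

theorem tensorWith_smul (r : ℝ) (X : EuclideanSpace ℝ (Fin n)) :
    tensorWith (W := W) (r • X) = (r : ℂ) • tensorWith X := by
  ext; simp [mul_smul]

variable [FiniteDimensional ℂ W]

theorem adjoint_tensorWith_apply (X : EuclideanSpace ℝ (Fin n)) (f : PiLp 2 fun _ : Fin n => W) :
    adjoint (tensorWith X) f = ∑ i, (X i : ℂ) • f i := by
  refine ext_inner_left ℂ fun φ => ?_
  simp only [adjoint_inner_right, PiLp.inner_apply, inner_sum, tensorWith_apply,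
    inner_smul_left, inner_smul_right, Complex.conj_ofReal]

def adjointConjBilin (M : (PiLp 2 fun _ : Fin n => W) →ₗ[ℂ] PiLp 2 fun _ : Fin n => W) (φ : W) :
    EuclideanSpace ℝ (Fin n) →ₗ[ℝ] EuclideanSpace ℝ (Fin n) →ₗ[ℝ] W :=
  LinearMap.mk₂ ℝ (fun X Y => adjoint (tensorWith X) (M (tensorWith Y φ)))
    (fun _ _ _ => by rw [tensorWith_add, map_add, LinearMap.add_apply])
    (fun _ _ _ => by
      rw [tensorWith_smul, map_smulₛₗ, LinearMap.smul_apply, Complex.conj_ofReal, Complex.coe_smul])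
    (fun _ _ _ => by rw [tensorWith_add, LinearMap.add_apply, map_add, map_add])
    (fun _ _ _ => by
      rw [tensorWith_smul, LinearMap.smul_apply, map_smul, map_smul, Complex.coe_smul])

def outerBilin (f : PiLp 2 fun _ : Fin n => W) :
    EuclideanSpace ℝ (Fin n) →ₗ[ℝ] EuclideanSpace ℝ (Fin n) →ₗ[ℝ] PiLp 2 fun _ : Fin n => W :=
  LinearMap.mk₂ ℝ (fun X Y => tensorWith X (adjoint (tensorWith Y) f))
    (fun _ _ _ => by rw [tensorWith_add, LinearMap.add_apply])
    (fun _ _ _ => by rw [tensorWith_smul, LinearMap.smul_apply, Complex.coe_smul])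
    (fun _ _ _ => by rw [tensorWith_add, map_add, LinearMap.add_apply, map_add])
    (fun _ _ _ => by
      rw [tensorWith_smul, map_smulₛₗ, LinearMap.smul_apply, Complex.conj_ofReal, map_smul,
        Complex.coe_smul])

def partialTrace (M : (PiLp 2 fun _ : Fin n => W) →ₗ[ℂ] PiLp 2 fun _ : Fin n => W) :
    W →ₗ[ℂ] W :=
  ∑ k, adjoint (tensorWith (EuclideanSpace.basisFun (Fin n) ℝ k)) ∘ₗ M ∘ₗ
    tensorWith (EuclideanSpace.basisFun (Fin n) ℝ k)

theorem sum_adjoint_comp_comp_eq_partialTrace {ι : Type*} [Fintype ι]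
    (b : OrthonormalBasis ι ℝ (EuclideanSpace ℝ (Fin n)))
    (M : (PiLp 2 fun _ : Fin n => W) →ₗ[ℂ] PiLp 2 fun _ : Fin n => W) :
    ∑ i, adjoint (tensorWith (b i)) ∘ₗ M ∘ₗ tensorWith (b i) = partialTrace M := by
  ext φ
  simp only [partialTrace, LinearMap.sum_apply, comp_apply]
  exact b.sum_apply_self_eq (adjointConjBilin M φ) _

theorem sum_tensorWith_comp_adjoint {ι : Type*} [Fintype ι]
    (b : OrthonormalBasis ι ℝ (EuclideanSpace ℝ (Fin n))) :
    ∑ i, tensorWith (W := W) (b i) ∘ₗ adjoint (tensorWith (b i)) = LinearMap.id := by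
  ext f : 1
  simp only [LinearMap.sum_apply, comp_apply]
  refine (b.sum_apply_self_eq (outerBilin f) (EuclideanSpace.basisFun (Fin n) ℝ)).trans ?_
  ext j
  simp [outerBilin, adjoint_tensorWith_apply]

theorem trace_partialTrace (M : (PiLp 2 fun _ : Fin n => W) →ₗ[ℂ] PiLp 2 fun _ : Fin n => W) :
    trace ℂ W (partialTrace M) = trace ℂ _ M :=
  calc trace ℂ W (partialTrace M)
      = ∑ k, trace ℂ _ (M * (tensorWith (EuclideanSpace.basisFun (Fin n) ℝ k) ∘ₗ
          adjoint (tensorWith (EuclideanSpace.basisFun (Fin n) ℝ k)))) := by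
        rw [partialTrace, map_sum]
        exact Finset.sum_congr rfl fun k _ => trace_comp_comm' _ _
    _ = trace ℂ _ M := by
        rw [← map_sum, ← Finset.mul_sum, sum_tensorWith_comp_adjoint, Module.End.mul_eq_comp,
          comp_id]

theorem adjoint_comp_partialTrace_comp (R : W →ₗ[ℂ] W)
    (t : EuclideanSpace ℝ (Fin n) ≃ₗᵢ[ℝ] EuclideanSpace ℝ (Fin n))
    (M : (PiLp 2 fun _ : Fin n => W) →ₗ[ℂ] PiLp 2 fun _ : Fin n => W) :
    adjoint R ∘ₗ partialTrace M ∘ₗ R =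
      partialTrace (adjoint (tensorMap R t.toLinearMap) ∘ₗ M ∘ₗ tensorMap R t.toLinearMap) := by
  have hterm : ∀ X, adjoint R ∘ₗ (adjoint (tensorWith (t X)) ∘ₗ M ∘ₗ tensorWith (t X)) ∘ₗ R =
      adjoint (tensorWith X) ∘ₗ (adjoint (tensorMap R t.toLinearMap) ∘ₗ M ∘ₗ
        tensorMap R t.toLinearMap) ∘ₗ tensorWith X := fun X => by
    have h := congrArg (fun T => adjoint T ∘ₗ M ∘ₗ T) (tensorMap_comp_tensorWith R t.toLinearMap X)
    simp only [adjoint_comp, comp_assoc] at h ⊢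
    exact h.symm
  rw [← sum_adjoint_comp_comp_eq_partialTrace ((EuclideanSpace.basisFun (Fin n) ℝ).map t) M]
  ext φ
  simp only [partialTrace, comp_apply, LinearMap.sum_apply, map_sum, OrthonormalBasis.map_apply]
  refine Finset.sum_congr rfl fun k _ => ?_
  simpa only [comp_apply] using LinearMap.congr_fun (hterm _) φ

end Clifford

end

open Clifford

theorem clifford_relative_dimension_formula (n : ℕ) (G : Type*) [Group G]
    (Wρ Wlam : Type*)
    [NormedAddCommGroup Wρ] [InnerProductSpace ℂ Wρ] [FiniteDimensional ℂ Wρ]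
    [NormedAddCommGroup Wlam] [InnerProductSpace ℂ Wlam] [FiniteDimensional ℂ Wlam]
    (ρ : G →* (Wρ ≃ₗᵢ[ℂ] Wρ)) (lam : G →* (Wlam ≃ₗᵢ[ℂ] Wlam))
    (τ : G →* (EuclideanSpace ℝ (Fin n) ≃ₗᵢ[ℝ] EuclideanSpace ℝ (Fin n)))
    (hρirr : ∀ q : Submodule ℂ Wρ, (∀ g : G, q.map (ρ g).toLinearMap ≤ q) → q = ⊥ ∨ q = ⊤)
    (Pr : (PiLp 2 fun _ : Fin n => Wρ) →ₗ[ℂ] Wlam)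
    (hcoiso : Pr ∘ₗ LinearMap.adjoint Pr = LinearMap.id)
    (hequiv : ∀ (g : G) (f : PiLp 2 fun _ : Fin n => Wρ),
      Pr ((WithLp.equiv 2 (∀ _ : Fin n, Wρ)).symm
        (fun i => ∑ k, (((τ g (EuclideanSpace.single k 1)) i : ℝ) : ℂ) •
          ρ g ((WithLp.equiv 2 (∀ _ : Fin n, Wρ)) f k)))
      = lam g (Pr f))
    (p : EuclideanSpace ℝ (Fin n) → Wρ →ₗ[ℂ] Wlam)
    (hp : ∀ X φ, p X φ = Pr ((WithLp.equiv 2 (∀ _ : Fin n, Wρ)).symm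
      (fun i => ((X i : ℝ) : ℂ) • φ))) :
    ∀ b : OrthonormalBasis (Fin n) ℝ (EuclideanSpace ℝ (Fin n)),
      (∑ i, LinearMap.adjoint (p (b i)) ∘ₗ p (b i)
        = (((Module.finrank ℂ Wlam : ℂ)) / ((Module.finrank ℂ Wρ : ℂ))) • LinearMap.id) ∧
      (∑ i, p (b i) ∘ₗ LinearMap.adjoint (p (b i)) = LinearMap.id) := by
  intro b
  have hp' : ∀ X, p X = Pr ∘ₗ tensorWith X := fun X => LinearMap.ext (hp X)
  set Q := adjoint Pr ∘ₗ Pr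
  have hQ : ∀ g, adjoint (tensorMap (ρ g).toLinearMap (τ g).toLinearMap) ∘ₗ Q ∘ₗ
      tensorMap (ρ g).toLinearMap (τ g).toLinearMap = Q :=
    fun g => adjoint_comp_comp_eq_of_comp_eq (lam g) (LinearMap.ext (hequiv g))
  have hsum : ∑ i, adjoint (p (b i)) ∘ₗ p (b i) = partialTrace Q := by
    simp only [hp', adjoint_comp, comp_assoc]
    exact sum_adjoint_comp_comp_eq_partialTrace b Q
  have hcomm : ∀ g, partialTrace Q ∘ₗ (ρ g).toLinearMap = (ρ g).toLinearMap ∘ₗ partialTrace Q :=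
    fun g => (ρ g).comp_eq_comp_of_adjoint_comp_comp_eq (by
      rw [adjoint_comp_partialTrace_comp _ (τ g), hQ])
  have htrace : trace ℂ Wρ (partialTrace Q) = Module.finrank ℂ Wlam := by
    rw [trace_partialTrace, trace_comp_comm', hcoiso, trace_id]
  refine ⟨?_, ?_⟩
  · rw [hsum, eq_trace_div_finrank_smul_id_of_commute (fun g => (ρ g).toLinearMap) hρirr _ hcomm,
      htrace]
  · calc ∑ i, p (b i) ∘ₗ adjoint (p (b i))
        = Pr ∘ₗ (∑ i, tensorWith (b i) ∘ₗ adjoint (tensorWith (b i))) ∘ₗ adjoint Pr := by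
          ext φ
          simp only [hp', adjoint_comp, comp_apply, LinearMap.sum_apply, map_sum]
      _ = LinearMap.id := by rw [sum_tensorWith_comp_adjoint, id_comp, hcoiso]
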